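/- Let d ≥ 2 be an integer. For every finite field F of odd characteristic, every nontrivial additive character e of F, and every g : F^d → ℂ, one has ‖ĝ‖_{L²(P,dσ)} ≤ ‖g‖_{L²(F^d)} + |F|^{(1-d)/4} ‖g‖_{L¹(F^d)}, i.e. (|F|^{-(d-1)} ∑_{ξ∈P} |ĝ(ξ)|²)^{1/2} ≤ (∑_{x∈F^d} |g(x)|²)^{1/2} + |F|^{(1-d)/4} ∑_{x∈F^d} |g(x)|. -/

import Mathlib

/-!
Expanding the square, `∑_{ξ ∈ P} |ĝ(ξ)|² = ∑_{x, x'} g(x) conj(g(x')) K(x' - x)` with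
`K(b, t) = ∑_ȳ e(b·ȳ + t ȳ·ȳ)`. This sum factors into one-variable sums `∑_c e(b c + t c²)`. For
`t ≠ 0` each has absolute value `√|F|`: in its squared modulus the substitution `c = c' + u` leaves
a phase linear in `c'`, which kills every `u ≠ 0` because `2t ≠ 0`. For `t = 0` the sum is
`|F|^{d-1}` at `b = 0` and `0` otherwise. Hence `|K(z)| ≤ |F|^{d-1} [z = 0] + |F|^{(d-1)/2}`, so
`∑_{ξ ∈ P} |ĝ(ξ)|² ≤ |F|^{d-1} ‖g‖₂² + |F|^{(d-1)/2} ‖g‖₁²`, and taking square roots gives the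
claim.
-/

open Finset

/-- The Fourier transform `ĝ(ξ) = ∑_{x ∈ F^d} g(x) e(−x·ξ)` of `g : F^d → ℂ`, restricted
to the paraboloid `P = {(x̄, x̄·x̄) : x̄ ∈ F^{d-1}} ⊆ F^d` and parameterized by
`ȳ ∈ F^{d-1}` (i.e. evaluated at `ξ = (ȳ, ȳ·ȳ)`). -/
noncomputable def fourierP {F : Type} [Field F] [Fintype F] {d : ℕ} (e : AddChar F ℂ)
    (g : (Fin (d - 1) → F) × F → ℂ) (y : Fin (d - 1) → F) : ℂ :=
  ∑ x : (Fin (d - 1) → F) × F, g x * e (-(∑ i, x.1 i * y i + x.2 * ∑ i, y i * y i))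

open ComplexConjugate

lemma AddChar.map_sum_eq_prod {A M : Type*} [AddCommMonoid A] [CommMonoid M] {ι : Type*}
    (ψ : AddChar A M) (s : Finset ι) (f : ι → A) : ψ (∑ i ∈ s, f i) = ∏ i ∈ s, ψ (f i) :=
  map_prod ψ.toMonoidHom (fun i ↦ Multiplicative.ofAdd (f i)) s

section CharacterSums

variable {F : Type*} [Field F] [Fintype F] {ψ : AddChar F ℂ}

theorem sum_addChar_quadratic_mul_conj (hψ : ψ.IsPrimitive) (h2 : (2 : F) ≠ 0) (b : F) {t : F}
    (ht : t ≠ 0) :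
    (∑ c, ψ (b * c + t * (c * c))) * conj (∑ c, ψ (b * c + t * (c * c))) = Fintype.card F := by
  classical
  set φ : F → F := fun c ↦ b * c + t * (c * c)
  have hshift : ∀ c u, φ (u + c) - φ c = φ u + c * (2 * t * u) := fun c u ↦ by simp only [φ]; ring
  calc (∑ c, ψ (φ c)) * conj (∑ c, ψ (φ c)) = ∑ c, ∑ c', ψ (φ c' - φ c) := by
        rw [map_sum, sum_mul_sum, sum_comm]
        simp only [← AddChar.map_neg_eq_conj, ← AddChar.map_add_eq_mul, sub_eq_add_neg]
    _ = ∑ c, ∑ u, ψ (φ u) * ψ (c * (2 * t * u)) := by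
        refine sum_congr rfl fun c _ ↦ ?_
        refine (Fintype.sum_equiv (Equiv.addRight c) _ _ fun u ↦ ?_).symm
        rw [Equiv.coe_addRight, ← AddChar.map_add_eq_mul, hshift]
    _ = ∑ u, ψ (φ u) * ∑ c, ψ (c * (2 * t * u)) := by
        rw [sum_comm]; simp only [mul_sum]
    _ = Fintype.card F := by
        simp [AddChar.sum_mulShift _ hψ, h2, ht, φ]

theorem norm_sum_addChar_quadratic (hψ : ψ.IsPrimitive) (h2 : (2 : F) ≠ 0) (b : F) {t : F}
    (ht : t ≠ 0) : ‖∑ c, ψ (b * c + t * (c * c))‖ = √(Fintype.card F) := by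
  have h := sum_addChar_quadratic_mul_conj hψ h2 b ht
  rw [Complex.mul_conj', ← Complex.ofReal_natCast, ← Complex.ofReal_pow, Complex.ofReal_inj] at h
  rw [← h, Real.sqrt_sq (norm_nonneg _)]

variable {ι : Type*} [Fintype ι] [DecidableEq ι]

/-- The inverse Fourier transform of the surface measure on the paraboloid. -/
noncomputable def paraboloidKernel (ψ : AddChar F ℂ) (z : (ι → F) × F) : ℂ :=
  ∑ y : ι → F, ψ (∑ i, z.1 i * y i + z.2 * ∑ i, y i * y i)

theorem paraboloidKernel_eq_prod (ψ : AddChar F ℂ) (z : (ι → F) × F) :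
    paraboloidKernel ψ z = ∏ i, ∑ c, ψ (z.1 i * c + z.2 * (c * c)) := by
  rw [Fintype.prod_sum, paraboloidKernel]
  refine sum_congr rfl fun y _ ↦ ?_
  rw [mul_sum, ← sum_add_distrib, AddChar.map_sum_eq_prod]

theorem norm_paraboloidKernel_of_snd_ne_zero (hψ : ψ.IsPrimitive) (h2 : (2 : F) ≠ 0)
    {z : (ι → F) × F} (hz : z.2 ≠ 0) :
    ‖paraboloidKernel ψ z‖ = √(Fintype.card F) ^ Fintype.card ι := by
  simp [paraboloidKernel_eq_prod, norm_prod, norm_sum_addChar_quadratic hψ h2 _ hz]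

theorem paraboloidKernel_mk_zero [DecidableEq F] (hψ : ψ.IsPrimitive) (b : ι → F) :
    paraboloidKernel ψ (b, 0) = if b = 0 then (Fintype.card F : ℂ) ^ Fintype.card ι else 0 := by
  simp only [paraboloidKernel_eq_prod, zero_mul, add_zero]
  simp_rw [mul_comm (b _), AddChar.sum_mulShift _ hψ]
  simp [prod_ite_zero, funext_iff]

theorem norm_paraboloidKernel_le [DecidableEq F] (hψ : ψ.IsPrimitive) (h2 : (2 : F) ≠ 0)
    (z : (ι → F) × F) :
    ‖paraboloidKernel ψ z‖ ≤
      (if z = 0 then (Fintype.card F : ℝ) ^ Fintype.card ι else 0) +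
        √(Fintype.card F) ^ Fintype.card ι := by
  obtain ⟨b, t⟩ := z
  by_cases ht : t = 0
  · subst ht
    rw [paraboloidKernel_mk_zero hψ]
    by_cases hb : b = 0 <;> simp [hb]
  · rw [norm_paraboloidKernel_of_snd_ne_zero hψ h2 ht]
    simp [ht]

end CharacterSums

theorem norm_sum_mul_conj_mul_sub_le {G : Type*} [AddGroup G] [Fintype G] [DecidableEq G]
    (g K : G → ℂ) {M N : ℝ} (hK : ∀ z, ‖K z‖ ≤ (if z = 0 then M else 0) + N) :
    ‖∑ x, ∑ x', g x * conj (g x') * K (x' - x)‖ ≤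
      M * ∑ x, ‖g x‖ ^ 2 + N * (∑ x, ‖g x‖) ^ 2 := by
  calc ‖∑ x, ∑ x', g x * conj (g x') * K (x' - x)‖
      ≤ ∑ x, ∑ x', ‖g x‖ * ‖g x'‖ * ((if x' - x = 0 then M else 0) + N) := by
        refine (norm_sum_le _ _).trans (sum_le_sum fun x _ ↦ (norm_sum_le _ _).trans
          (sum_le_sum fun x' _ ↦ ?_))
        rw [norm_mul, norm_mul, Complex.norm_conj]
        exact mul_le_mul_of_nonneg_left (hK _) (by positivity)
    _ = M * ∑ x, ‖g x‖ ^ 2 + N * (∑ x, ‖g x‖) ^ 2 := by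
        simp only [mul_add, sum_add_distrib, sub_eq_zero, mul_ite, mul_zero, sum_ite_eq', mem_univ,
          if_true]
        rw [sq, sum_mul_sum, mul_sum, mul_sum]
        congr 1 <;> refine sum_congr rfl fun x _ ↦ ?_
        · ring
        · rw [mul_sum]; exact sum_congr rfl fun x' _ ↦ by ring

theorem sum_norm_fourierP_sq {F : Type} [Field F] [Fintype F] {d : ℕ} (e : AddChar F ℂ)
    (g : (Fin (d - 1) → F) × F → ℂ) :
    ((∑ y, ‖fourierP e g y‖ ^ 2 : ℝ) : ℂ) =
      ∑ x, ∑ x', g x * conj (g x') * paraboloidKernel e (x' - x) := by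
  have hphase : ∀ (x x' : (Fin (d - 1) → F) × F) (y : Fin (d - 1) → F),
      e (-(∑ i, x.1 i * y i + x.2 * ∑ i, y i * y i)) *
          conj (e (-(∑ i, x'.1 i * y i + x'.2 * ∑ i, y i * y i))) =
        e (∑ i, (x' - x).1 i * y i + (x' - x).2 * ∑ i, y i * y i) := fun x x' y ↦ by
    rw [← AddChar.map_neg_eq_conj, neg_neg, ← AddChar.map_add_eq_mul]
    congr 1
    simp only [Prod.fst_sub, Prod.snd_sub, Pi.sub_apply, sub_mul, sum_sub_distrib]
    ring
  push_cast
  simp_rw [← Complex.mul_conj', fourierP, map_sum, sum_mul_sum, map_mul, mul_mul_mul_comm _ (e _),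
    hphase]
  rw [sum_comm]
  refine sum_congr rfl fun x _ ↦ ?_
  rw [sum_comm]
  simp_rw [paraboloidKernel, mul_sum]

theorem sum_norm_fourierP_sq_le {F : Type} [Field F] [Fintype F] (hchar : ringChar F ≠ 2)
    {d : ℕ} {e : AddChar F ℂ} (he : e ≠ 1) (g : (Fin (d - 1) → F) × F → ℂ) :
    ∑ y, ‖fourierP e g y‖ ^ 2 ≤
      (Fintype.card F : ℝ) ^ (d - 1) * ∑ x, ‖g x‖ ^ 2 +
        √(Fintype.card F) ^ (d - 1) * (∑ x, ‖g x‖) ^ 2 := by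
  classical
  have hK := norm_paraboloidKernel_le (ι := Fin (d - 1)) (AddChar.IsPrimitive.of_ne_one he)
    (Ring.two_ne_zero hchar)
  rw [Fintype.card_fin] at hK
  calc ∑ y, ‖fourierP e g y‖ ^ 2 = ‖((∑ y, ‖fourierP e g y‖ ^ 2 : ℝ) : ℂ)‖ :=
        (Complex.norm_of_nonneg (by positivity)).symm
    _ ≤ _ := by
        rw [sum_norm_fourierP_sq]
        exact norm_sum_mul_conj_mul_sub_le g _ hK

theorem inv_mul_rpow_half_le {q T A L : ℝ} (n : ℕ) (hq : 0 < q) (hA : 0 ≤ A) (hL : 0 ≤ L)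
    (hT : T ≤ q ^ n * A + √q ^ n * L ^ 2) :
    ((q ^ n)⁻¹ * T) ^ (1 / 2 : ℝ) ≤ A ^ (1 / 2 : ℝ) + q ^ (-(n : ℝ) / 4) * L := by
  have hu2s : (q ^ (-(n : ℝ) / 4)) ^ 2 * √q ^ n = 1 := by
    rw [Real.sqrt_eq_rpow, ← Real.rpow_mul_natCast hq.le, ← Real.rpow_mul_natCast hq.le,
      ← Real.rpow_add hq]
    convert Real.rpow_zero q using 2
    push_cast
    ring
  have hs : (√q ^ n) ^ 2 = q ^ n := by rw [← pow_mul, mul_comm, pow_mul, Real.sq_sqrt hq.le]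
  set u := q ^ (-(n : ℝ) / 4)
  set s := √q ^ n
  have hsq : (q ^ n)⁻¹ * T ≤ (√A + u * L) ^ 2 := by
    rw [inv_mul_le_iff₀ (by positivity)]
    rw [← hs] at hT ⊢
    have hcross : 0 ≤ s ^ 2 * √A * u * L := by positivity
    have hL2 : s ^ 2 * (u * L) ^ 2 = s * L ^ 2 := by linear_combination s * L ^ 2 * hu2s
    have hA2 : s ^ 2 * √A ^ 2 = s ^ 2 * A := by rw [Real.sq_sqrt hA]
    linarith [hT, hcross, hL2, hA2]
  rw [← Real.sqrt_eq_rpow, ← Real.sqrt_eq_rpow]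
  exact (Real.sqrt_le_sqrt hsq).trans_eq (Real.sqrt_sq (by positivity))

theorem stmt13_general (d : ℕ)
    (F : Type) [Field F] [Fintype F] (hchar : ringChar F ≠ 2)
    (e : AddChar F ℂ) (he : e ≠ 1) (g : (Fin (d - 1) → F) × F → ℂ) :
    (((Fintype.card F : ℝ) ^ (d - 1))⁻¹ *
        ∑ y : Fin (d - 1) → F, ‖fourierP e g y‖ ^ 2) ^ ((1 : ℝ) / 2)
      ≤ (∑ x : (Fin (d - 1) → F) × F, ‖g x‖ ^ 2) ^ ((1 : ℝ) / 2) +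
        (Fintype.card F : ℝ) ^ ((1 - (d : ℝ)) / 4) *
          ∑ x : (Fin (d - 1) → F) × F, ‖g x‖ := by
  have hq : (1 : ℝ) ≤ Fintype.card F := by exact_mod_cast Fintype.card_pos
  have hd : (d : ℝ) ≤ ((d - 1 : ℕ) : ℝ) + 1 := by exact_mod_cast (by omega : d ≤ d - 1 + 1)
  calc _ ≤ (∑ x, ‖g x‖ ^ 2) ^ (1 / 2 : ℝ) +
          (Fintype.card F : ℝ) ^ (-((d - 1 : ℕ) : ℝ) / 4) * ∑ x, ‖g x‖ :=
        inv_mul_rpow_half_le (d - 1) (by positivity) (by positivity) (by positivity)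
          (sum_norm_fourierP_sq_le hchar he g)
    _ ≤ _ := by
        gcongr
        linarith

/-- For `d ≥ 2`, every finite field `F` of odd characteristic, every nontrivial additive
character `e`, and every `g : F^d → ℂ`:
`‖ĝ‖_{L²(P,dσ)} ≤ ‖g‖_{L²(F^d)} + |F|^{(1-d)/4} ‖g‖_{L¹(F^d)}`. -/
theorem stmt13 (d : ℕ) (hd : 2 ≤ d)
    (F : Type) [Field F] [Fintype F] (hchar : ringChar F ≠ 2)
    (e : AddChar F ℂ) (he : e ≠ 1) (g : (Fin (d - 1) → F) × F → ℂ) :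
    (((Fintype.card F : ℝ) ^ (d - 1))⁻¹ *
        ∑ y : Fin (d - 1) → F, ‖fourierP e g y‖ ^ 2) ^ ((1 : ℝ) / 2)
      ≤ (∑ x : (Fin (d - 1) → F) × F, ‖g x‖ ^ 2) ^ ((1 : ℝ) / 2) +
        (Fintype.card F : ℝ) ^ ((1 - (d : ℝ)) / 4) *
          ∑ x : (Fin (d - 1) → F) × F, ‖g x‖ :=
  stmt13_general d F hchar e he g
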